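/- arXiv:2412.21012 — 4 statements merged into one kernel-verified Lean document; each statement's English description precedes it below -/
import Mathlib

section
/- Let (A,σ) be a pre-metric group over a field K and H ≤ A an isotropic subgroup (σ restricted to H is identically 1). Then the Gauss sum satisfies Σ(A) = |H| · Σ(H^⊥/H), where H^⊥ is the orthogonal complement of H with respect to δσ and Σ denotes the sum of the values of the (induced) quadratic form. -/
/-!
Split `A` into cosets `yH`. Since `σ` is trivial on `H`, `h ↦ σ(yh)/σ(y) = δσ(h, y)` is a
character of `H`, trivial exactly when `y ∈ H^⊥`; by orthogonality of characters the coset sum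
vanishes for `y ∉ H^⊥`. Hence `Σ(A)` is the sum of `σ` over `H^⊥`, on which `σ` is constant
along cosets of `H`, giving `|H| · Σ(H^⊥/H)`.
-/

namespace Subgroup

variable {G M : Type*} [Group G] [Fintype G] [AddCommMonoid M] (s : Subgroup G)
  [Fintype (G ⧸ s)] [Fintype s]

theorem sum_eq_sum_quotient_sum_out_mul (f : G → M) :
    ∑ g, f g = ∑ q : G ⧸ s, ∑ h : s, f (q.out * h) := by
  have hmk (q : G ⧸ s) (h : s) : (QuotientGroup.mk (q.out * h) : G ⧸ s) = q := by
    rw [QuotientGroup.mk_mul_of_mem _ h.2, QuotientGroup.out_eq']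
  let e : G ≃ (G ⧸ s) × s :=
    { toFun := fun g => (QuotientGroup.mk g, ⟨(QuotientGroup.mk g : G ⧸ s).out⁻¹ * g,
        QuotientGroup.eq.mp (QuotientGroup.out_eq' _)⟩)
      invFun := fun p => p.1.out * p.2
      left_inv := fun g => mul_inv_cancel_left _ _
      right_inv := fun ⟨q, h⟩ => Prod.ext (hmk q h) (Subtype.ext (by simp [hmk])) }
  rw [← Fintype.sum_prod_type']
  exact Fintype.sum_equiv e _ _ fun g => by simp [e]

theorem sum_comp_mk_eq_card_smul_sum (f : G ⧸ s → M) :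
    ∑ g : G, f g = Nat.card s • ∑ q, f q := by
  rw [sum_eq_sum_quotient_sum_out_mul s, Finset.smul_sum]
  refine Finset.sum_congr rfl fun q _ => ?_
  simp [QuotientGroup.mk_mul_of_mem _ (Subtype.prop _), Nat.card_eq_fintype_card]

theorem sum_eq_sum_subgroup_of_sum_coset_eq_zero {t : Subgroup G} [DecidablePred (· ∈ t)]
    (hst : s ≤ t) (f : G → M)
    (hf : ∀ y ∉ t, ∑ h : s, f (y * h) = 0) : ∑ g, f g = ∑ x : t, f x := by
  have ht : ∑ x : t, f x = ∑ g, if g ∈ t then f g else 0 := by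
    rw [Finset.sum_ite, Finset.sum_const_zero, add_zero]
    exact (Finset.sum_subtype _ (by simp) f).symm
  rw [ht, sum_eq_sum_quotient_sum_out_mul s, sum_eq_sum_quotient_sum_out_mul s]
  refine Finset.sum_congr rfl fun q _ => ?_
  by_cases hq : q.out ∈ t
  · exact Finset.sum_congr rfl fun h _ => (if_pos (t.mul_mem hq (hst h.2))).symm
  · rw [hf _ hq]
    refine (Finset.sum_eq_zero fun h _ => if_neg fun hmem => hq ?_).symm
    simpa using t.mul_mem hmem (t.inv_mem (hst h.2))

end Subgroup

section MulPolar

variable {A M : Type*} [CommGroup A] [CommGroup M]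

/-- The bicharacter `δσ` of a quadratic form `σ`. -/
def mulPolar (σ : A → M) (a b : A) : M := σ (a * b) * (σ a)⁻¹ * (σ b)⁻¹

def mulPolarHom (σ : A → M)
    (hδ : ∀ a b c : A, mulPolar σ (a * b) c = mulPolar σ a c * mulPolar σ b c) (c : A) :
    A →* M :=
  MonoidHom.mk' (fun a => mulPolar σ a c) fun a b => hδ a b c

theorem sum_units_mul_eq_zero_of_isotropic {R : Type*} [CommRing R] [IsDomain R]
    (σ : A → Rˣ)
    (hδ : ∀ a b c : A, mulPolar σ (a * b) c = mulPolar σ a c * mulPolar σ b c)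
    (H : Subgroup A) [Fintype H] (hiso : ∀ h ∈ H, σ h = 1)
    {y : A} (hy : ∃ h ∈ H, σ (y * h) ≠ σ y * σ h) :
    ∑ h : H, (σ (y * h) : R) = 0 := by
  let χ : H →* R := (Units.coeHom R).comp ((mulPolarHom σ hδ y).comp H.subtype)
  have hχ (h : H) : (σ (y * h) : R) = σ y * χ h := by
    simp [χ, mulPolarHom, mulPolar, hiso h h.2, mul_comm (h : A) y, mul_left_comm (σ y : R)]
  have hχ_ne : χ ≠ 1 := by
    obtain ⟨h, hH, hne⟩ := hy
    intro h1
    apply hne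
    rw [hiso h hH, mul_one]
    ext
    rw [hχ ⟨h, hH⟩, h1, MonoidHom.one_apply, mul_one]
  rw [Finset.sum_congr rfl fun h _ => hχ h, ← Finset.mul_sum, sum_hom_units_eq_zero χ hχ_ne,
    mul_zero]

end MulPolar

theorem stmt2_general {K : Type*} [Field K] {A : Type*} [CommGroup A] [Fintype A]
    (σ : A → Kˣ)
    (hδ : ∀ a b c : A,
      σ (a * b * c) * (σ (a * b))⁻¹ * (σ c)⁻¹ =
        (σ (a * c) * (σ a)⁻¹ * (σ c)⁻¹) * (σ (b * c) * (σ b)⁻¹ * (σ c)⁻¹))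
    (H : Subgroup A) (hiso : ∀ h ∈ H, σ h = 1)
    (HP : Subgroup A)
    (hHP : ∀ a : A, a ∈ HP ↔ ∀ h ∈ H, σ (a * h) = σ a * σ h)
    [Fintype (HP ⧸ H.subgroupOf HP)]
    (σbar : (HP ⧸ H.subgroupOf HP) → Kˣ)
    (hσbar : ∀ x : HP, σbar (QuotientGroup.mk x) = σ (x : A)) :
    ∑ a : A, (σ a : K) =
      (Nat.card H : K) * ∑ q : HP ⧸ H.subgroupOf HP, (σbar q : K) := by
  classical
  have hH_le : H ≤ HP := fun h hh => (hHP h).2 fun h' hh' => by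
    rw [hiso h hh, hiso h' hh', hiso _ (H.mul_mem hh hh'), one_mul]
  have hcoset (y : A) (hy : y ∉ HP) : ∑ h : H, (σ (y * h) : K) = 0 := by
    refine sum_units_mul_eq_zero_of_isotropic σ hδ H hiso ?_
    simpa [hHP] using hy
  have hcard : Nat.card (H.subgroupOf HP) = Nat.card H :=
    Nat.card_congr (Subgroup.subgroupOfEquivOfLe hH_le).toEquiv
  calc ∑ a : A, (σ a : K) = ∑ x : HP, (σ x : K) :=
        Subgroup.sum_eq_sum_subgroup_of_sum_coset_eq_zero H hH_le _ hcoset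
    _ = ∑ x : HP, (σbar x : K) := by simp only [hσbar]
    _ = (Nat.card H : K) * ∑ q : HP ⧸ H.subgroupOf HP, (σbar q : K) := by
        rw [Subgroup.sum_comp_mk_eq_card_smul_sum (H.subgroupOf HP) (fun q => (σbar q : K)), hcard, nsmul_eq_mul]

/-- Gauss sum and isotropic subgroups: if `H` is an isotropic subgroup for the
quadratic form `σ` on a pre-metric group `A`, and `HP = H^⊥` is the orthogonal
complement of `H` with respect to `δσ`, then `Σ(A) = |H| · Σ(H^⊥/H)`, where
`σbar` is the induced quadratic form on the quotient. -/
theorem stmt2 {K : Type*} [Field K] {A : Type*} [CommGroup A] [Fintype A]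
    (σ : A → Kˣ)
    (hinv : ∀ a : A, σ a⁻¹ = σ a)
    (hδ : ∀ a b c : A,
      σ (a * b * c) * (σ (a * b))⁻¹ * (σ c)⁻¹ =
        (σ (a * c) * (σ a)⁻¹ * (σ c)⁻¹) * (σ (b * c) * (σ b)⁻¹ * (σ c)⁻¹))
    (H : Subgroup A) (hiso : ∀ h ∈ H, σ h = 1)
    (HP : Subgroup A)
    (hHP : ∀ a : A, a ∈ HP ↔ ∀ h ∈ H, σ (a * h) = σ a * σ h)
    [Fintype (HP ⧸ H.subgroupOf HP)]
    (σbar : (HP ⧸ H.subgroupOf HP) → Kˣ)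
    (hσbar : ∀ x : HP, σbar (QuotientGroup.mk x) = σ (x : A)) :
    ∑ a : A, (σ a : K) =
      (Nat.card H : K) * ∑ q : HP ⧸ H.subgroupOf HP, (σbar q : K) :=
  stmt2_general σ hδ H hiso HP hHP σbar hσbar
end

section
/- For n > 0, there are exactly four equivalence classes, under the action of Aut(K₄ⁿ × K₄, h^n ⊕ ℓ²), of complex-valued quadratic forms on K₄ⁿ × K₄ with coboundary h^n ⊕ ℓ². For n = 0, there are exactly three. -/
/-!
Write `h^n ⊕ ℓ² = (-1)^B` for the nondegenerate symmetric `𝔽₂`-bilinear form `B`. Two quadratic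
forms with this coboundary differ by a character, i.e. `σ' = σ · (-1)^{B(d, ·)}`, and the Gauss
sums then satisfy `Σ(σ') · σ(d) = Σ(σ)`. As `Σ(σ) · Σ(σ⁻¹) = |V|`, Gauss sums never vanish, so
`Σ(σ') = Σ(σ)` forces `σ(d) = 1`; then `B(d, d) = 0` and the transvection `x ↦ x + B(d, x) d`
is an isometry carrying `σ` to `σ'`. Hence the classes are indexed by the values of one fixed
form `σ₀`, equal to `(-1)^(ab)` on each hyperbolic factor and to `i^(a + b)` on `ℓ²`: all fourth
roots of unity when `n > 0`, but only `1, i, -1` when `n = 0`.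
-/

/-- The Klein four-group. -/
abbrev K4 : Type := ZMod 2 × ZMod 2

/-- The standard hyperbolic pairing on `K₄`, with complex values. -/
noncomputable def hqC (a b : K4) : ℂˣ :=
  (-1 : ℂˣ) ^ (a.1 * b.2 + a.2 * b.1 : ZMod 2).val

/-- The bicharacter `ℓ` on `ℤ/2ℤ` with `ℓ(g,g) = -1`, complex values. -/
noncomputable def ellC (a b : ZMod 2) : ℂˣ := (-1 : ℂˣ) ^ (a * b : ZMod 2).val

/-- The bicharacter `h^n ⊕ ℓ²` on `K₄ⁿ × K₄`. -/
noncomputable def chiHL (n : ℕ) (x y : (Fin n → K4) × K4) : ℂˣ :=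
  (∏ i, hqC (x.1 i) (y.1 i)) * ellC x.2.1 y.2.1 * ellC x.2.2 y.2.2

/-- `σ` is a complex quadratic form with coboundary `h^n ⊕ ℓ²`. -/
def AdmHL (n : ℕ) (σ : (Fin n → K4) × K4 → ℂˣ) : Prop :=
  ∀ x y, σ (x + y) = σ x * σ y * chiHL n x y

/-- Two forms are equivalent if related by an automorphism preserving the
bicharacter `h^n ⊕ ℓ²`. -/
def EquivHL (n : ℕ) (σ σ' : (Fin n → K4) × K4 → ℂˣ) : Prop :=
  ∃ f : ((Fin n → K4) × K4) ≃+ ((Fin n → K4) × K4),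
    (∀ x y, chiHL n (f x) (f y) = chiHL n x y) ∧ ∀ x, σ' (f x) = σ x

open Finset

noncomputable def signChar : AddChar (ZMod 2) ℂˣ where
  toFun u := (-1) ^ u.val
  map_zero_eq_one' := rfl
  map_add_eq_mul' u v := by rw [ZMod.val_add, ← pow_add, ← pow_eq_pow_mod _ (by simp)]

@[simp] lemma signChar_one : signChar 1 = -1 := pow_one _

lemma ZMod.two_cases (u : ZMod 2) : u = 0 ∨ u = 1 := by revert u; decide

lemma signChar_injective : Function.Injective signChar := by
  intro u v huv
  rcases u.two_cases with rfl | rfl <;> rcases v.two_cases with rfl | rfl <;>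
    simp_all [Units.ext_iff] <;> norm_num at huv

lemma exists_signChar_eq {u : ℂˣ} (h : u * u = 1) : ∃ a, signChar a = u := by
  have hC : (u : ℂ) * u = 1 := by simpa using congrArg Units.val h
  rcases mul_self_eq_one_iff.mp hC with h1 | h1
  · exact ⟨0, Units.ext (by simp [h1])⟩
  · exact ⟨1, Units.ext (by simp [h1])⟩

lemma signChar_sum {ι : Type*} (s : Finset ι) (g : ι → ZMod 2) :
    signChar (∑ i ∈ s, g i) = ∏ i ∈ s, signChar (g i) := by
  classical
  induction s using Finset.induction_on with
  | empty => simp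
  | insert a s ha ih => rw [sum_insert ha, prod_insert ha, AddChar.map_add_eq_mul, ih]

section QuadraticRefinement

variable {V : Type*} [AddCommGroup V] [Module (ZMod 2) V]
variable (B : LinearMap.BilinForm (ZMod 2) V)

def IsQuadraticRefinement (σ : V → ℂˣ) : Prop :=
  ∀ x y, σ (x + y) = σ x * σ y * signChar (B x y)

noncomputable def twist (σ : V → ℂˣ) (d : V) : V → ℂˣ := fun x => σ x * signChar (B d x)

def FormsEquivalent (σ σ' : V → ℂˣ) : Prop :=
  ∃ f : V ≃+ V, (∀ x y, B (f x) (f y) = B x y) ∧ ∀ x, σ' (f x) = σ x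

def quadGaussSum [Fintype V] (σ : V → ℂˣ) : ℂ := ∑ x, (σ x : ℂ)

def IsClassRepresentatives {m : ℕ} (S : Fin m → V → ℂˣ) : Prop :=
  (∀ i, IsQuadraticRefinement B (S i)) ∧ (∀ i j, FormsEquivalent B (S i) (S j) → i = j) ∧
    ∀ σ, IsQuadraticRefinement B σ → ∃ i, FormsEquivalent B σ (S i)

variable {B} {σ σ' : V → ℂˣ}

lemma IsQuadraticRefinement.map_zero (hσ : IsQuadraticRefinement B σ) : σ 0 = 1 := by
  have h := hσ 0 0
  rw [add_zero, LinearMap.map_zero₂, AddChar.map_zero_eq_one, mul_one] at h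
  exact left_eq_mul.mp h

lemma IsQuadraticRefinement.mul_self_mul_signChar (hσ : IsQuadraticRefinement B σ) (x : V) :
    σ x * σ x * signChar (B x x) = 1 := by
  rw [← hσ, ZModModule.add_self, hσ.map_zero]

lemma IsQuadraticRefinement.pow_four (hσ : IsQuadraticRefinement B σ) (x : V) : σ x ^ 4 = 1 := by
  have hs : signChar (B x x) * signChar (B x x) = 1 := by
    rw [← AddChar.map_add_eq_mul, ZModModule.add_self, AddChar.map_zero_eq_one]
  have hσx : σ x * σ x = signChar (B x x) :=
    (eq_inv_of_mul_eq_one_left (hσ.mul_self_mul_signChar x)).trans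
      (inv_eq_of_mul_eq_one_right hs)
  rw [show 4 = 2 + 2 from rfl, pow_add, sq, hσx, hs]

lemma isQuadraticRefinement_twist (hσ : IsQuadraticRefinement B σ) (d : V) :
    IsQuadraticRefinement B (twist B σ d) := by
  intro x y
  simp only [twist, hσ x y, map_add, AddChar.map_add_eq_mul]
  ac_rfl

lemma IsQuadraticRefinement.exists_eq_twist [Finite V] (hB : B.Nondegenerate)
    (hσ : IsQuadraticRefinement B σ) (hσ' : IsQuadraticRefinement B σ') :
    ∃ d, σ' = twist B σ d := by
  set τ : V → ℂˣ := fun x => σ' x / σ x with hτ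
  have hτ_add : ∀ x y, τ (x + y) = τ x * τ y := by
    intro x y
    simp only [hτ, hσ x y, hσ' x y, mul_div_mul_right_eq_div, mul_div_mul_comm]
  have hτ_sq : ∀ x, τ x * τ x = 1 := by
    intro x
    have h := (hσ'.mul_self_mul_signChar x).trans (hσ.mul_self_mul_signChar x).symm
    rw [mul_left_inj] at h
    simp only [hτ, ← mul_div_mul_comm, h, div_self']
  choose φ hφ using fun x => exists_signChar_eq (hτ_sq x)
  have hφ_add : ∀ x y, φ (x + y) = φ x + φ y := fun x y =>
    signChar_injective (by rw [hφ, AddChar.map_add_eq_mul, hφ, hφ, hτ_add])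
  let φL : Module.Dual (ZMod 2) V := (AddMonoidHom.mk' φ hφ_add).toZModLinearMap 2
  refine ⟨(B.toDual hB).symm φL, funext fun x => ?_⟩
  rw [twist, LinearMap.BilinForm.apply_toDual_symm_apply]
  exact (mul_div_cancel (σ x) (σ' x)).symm.trans (congrArg _ (hφ x).symm)

lemma IsQuadraticRefinement.formsEquivalent_twist (hBs : B.IsSymm)
    (hσ : IsQuadraticRefinement B σ) {d : V} (hd : σ d = 1) :
    FormsEquivalent B σ (twist B σ d) := by
  have hdd : B d d = 0 := signChar_injective <| by
    have h := hσ.mul_self_mul_signChar d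
    rwa [hd, one_mul, one_mul, ← AddChar.map_zero_eq_one signChar] at h
  refine ⟨(LinearEquiv.transvection hdd).toAddEquiv, fun x y => ?_, fun x => ?_⟩
  · change B (x + B d x • d) (y + B d y • d) = B x y
    simp only [map_add, map_smul, LinearMap.add_apply, LinearMap.smul_apply, smul_eq_mul, hdd,
      hBs.eq x d]
    have h2 : (2 : ZMod 2) = 0 := rfl
    linear_combination (B d x * B d y) * h2
  · change twist B σ d (x + B d x • d) = σ x
    rcases (B d x).two_cases with h | h
    · simp [twist, h]
    · simp [twist, h, hσ x d, hBs.eq x d, hd, hdd]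

section Fintype

variable [Fintype V]

lemma FormsEquivalent.quadGaussSum_eq (h : FormsEquivalent B σ σ') :
    quadGaussSum σ = quadGaussSum σ' := by
  obtain ⟨f, -, hf⟩ := h
  exact Fintype.sum_equiv f.toEquiv _ _ fun x => by simp [hf]

lemma IsQuadraticRefinement.quadGaussSum_twist_mul (hBs : B.IsSymm)
    (hσ : IsQuadraticRefinement B σ) (d : V) :
    quadGaussSum (twist B σ d) * σ d = quadGaussSum σ := by
  rw [quadGaussSum, sum_mul]
  refine Fintype.sum_equiv (Equiv.addRight d) _ _ fun x => ?_
  rw [Equiv.coe_addRight, hσ x d, twist, hBs.eq d x]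
  push_cast
  ring

lemma sum_signChar_eq_zero (hB : B.SeparatingRight) {z : V} (hz : z ≠ 0) :
    ∑ y, (signChar (B y z) : ℂ) = 0 := by
  obtain ⟨y₀, hy₀⟩ : ∃ y₀, B y₀ z ≠ 0 := by
    by_contra! h
    exact hz (hB z h)
  have h1 : B y₀ z = 1 := (B y₀ z).two_cases.resolve_left hy₀
  have hneg : ∑ y, (signChar (B y z) : ℂ) = -∑ y, (signChar (B y z) : ℂ) := by
    rw [← neg_one_mul, mul_sum]
    refine Fintype.sum_equiv (Equiv.addRight y₀) _ _ fun y => ?_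
    simp [AddChar.map_add_eq_mul, h1]
  exact self_eq_neg.mp hneg

lemma IsQuadraticRefinement.quadGaussSum_mul_sum_inv (hB : B.SeparatingRight)
    (hσ : IsQuadraticRefinement B σ) :
    quadGaussSum σ * ∑ x, (((σ x)⁻¹ : ℂˣ) : ℂ) = Fintype.card V := by
  have hshift : ∀ y,
      ∑ x, (σ x : ℂ) * ((σ y)⁻¹ : ℂˣ) = ∑ z, (σ z : ℂ) * signChar (B y z) := by
    intro y
    refine (Fintype.sum_equiv (Equiv.addLeft y) _ _ fun z => ?_).symm
    rw [Equiv.coe_addLeft, hσ y z]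
    push_cast
    field_simp
  calc quadGaussSum σ * ∑ x, (((σ x)⁻¹ : ℂˣ) : ℂ)
      = ∑ y, ∑ x, (σ x : ℂ) * ((σ y)⁻¹ : ℂˣ) := by
        rw [quadGaussSum, sum_mul_sum, sum_comm]
    _ = ∑ z, (σ z : ℂ) * ∑ y, (signChar (B y z) : ℂ) := by
        simp only [hshift, mul_sum]; exact sum_comm
    _ = Fintype.card V := by
        rw [sum_eq_single 0 (fun z _ hz => by rw [sum_signChar_eq_zero hB hz, mul_zero]) (by simp)]
        simp [hσ.map_zero]

lemma IsQuadraticRefinement.quadGaussSum_ne_zero (hB : B.SeparatingRight)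
    (hσ : IsQuadraticRefinement B σ) : quadGaussSum σ ≠ 0 := by
  intro h
  have := hσ.quadGaussSum_mul_sum_inv hB
  rw [h, zero_mul, eq_comm, Nat.cast_eq_zero] at this
  exact Fintype.card_ne_zero this

lemma IsQuadraticRefinement.formsEquivalent_iff (hB : B.Nondegenerate) (hBs : B.IsSymm)
    (hσ : IsQuadraticRefinement B σ) (hσ' : IsQuadraticRefinement B σ') :
    FormsEquivalent B σ σ' ↔ quadGaussSum σ = quadGaussSum σ' := by
  refine ⟨FormsEquivalent.quadGaussSum_eq, fun h => ?_⟩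
  obtain ⟨d, rfl⟩ := hσ.exists_eq_twist hB hσ'
  have hd : σ d = 1 := Units.ext <| mul_left_cancel₀ (hσ'.quadGaussSum_ne_zero hB.2) <| by
    rw [hσ.quadGaussSum_twist_mul hBs, h, Units.val_one, mul_one]
  exact hσ.formsEquivalent_twist hBs hd

lemma IsQuadraticRefinement.formsEquivalent_twist_iff (hB : B.Nondegenerate) (hBs : B.IsSymm)
    (hσ : IsQuadraticRefinement B σ) (d d' : V) :
    FormsEquivalent B (twist B σ d) (twist B σ d') ↔ σ d = σ d' := by
  rw [(isQuadraticRefinement_twist hσ d).formsEquivalent_iff hB hBs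
    (isQuadraticRefinement_twist hσ d'), Units.ext_iff]
  have hG : ∀ e, quadGaussSum (twist B σ e) = quadGaussSum σ * (σ e : ℂ)⁻¹ := fun e => by
    rw [← hσ.quadGaussSum_twist_mul hBs e, mul_inv_cancel_right₀ (Units.ne_zero _)]
  rw [hG, hG, mul_right_inj' (hσ.quadGaussSum_ne_zero hB.2), inv_inj]

theorem IsQuadraticRefinement.isClassRepresentatives_twist (hB : B.Nondegenerate)
    (hBs : B.IsSymm) {σ₀ : V → ℂˣ} (h₀ : IsQuadraticRefinement B σ₀) {m : ℕ} (c : Fin m → V)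
    (hinj : Function.Injective (σ₀ ∘ c)) (hsurj : ∀ d, ∃ i, σ₀ (c i) = σ₀ d) :
    IsClassRepresentatives B fun i => twist B σ₀ (c i) := by
  refine ⟨fun i => isQuadraticRefinement_twist h₀ (c i),
    fun i j h => hinj ((h₀.formsEquivalent_twist_iff hB hBs _ _).mp h), fun σ hσ => ?_⟩
  obtain ⟨d, rfl⟩ := h₀.exists_eq_twist hB hσ
  obtain ⟨i, hi⟩ := hsurj d
  exact ⟨i, (h₀.formsEquivalent_twist_iff hB hBs _ _).mpr hi.symm⟩

end Fintype

end QuadraticRefinement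

noncomputable def hypEllForm (n : ℕ) : LinearMap.BilinForm (ZMod 2) ((Fin n → K4) × K4) :=
  LinearMap.mk₂ (ZMod 2)
    (fun x y => ∑ i, ((x.1 i).1 * (y.1 i).2 + (x.1 i).2 * (y.1 i).1)
      + x.2.1 * y.2.1 + x.2.2 * y.2.2)
    (fun x x' y => by
      simp only [Prod.fst_add, Prod.snd_add, Pi.add_apply, add_mul, sum_add_distrib]; ring)
    (fun c x y => by
      simp only [Prod.smul_fst, Prod.smul_snd, Pi.smul_apply, smul_eq_mul, mul_add, mul_sum,
        mul_assoc])
    (fun x y y' => by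
      simp only [Prod.fst_add, Prod.snd_add, Pi.add_apply, mul_add, sum_add_distrib]; ring)
    (fun c x y => by
      simp only [Prod.smul_fst, Prod.smul_snd, Pi.smul_apply, smul_eq_mul, mul_add, mul_sum,
        mul_left_comm c])

lemma chiHL_eq (n : ℕ) (x y : (Fin n → K4) × K4) :
    chiHL n x y = signChar (hypEllForm n x y) := by
  rw [hypEllForm, LinearMap.mk₂_apply, AddChar.map_add_eq_mul, AddChar.map_add_eq_mul,
    signChar_sum]
  rfl

lemma hypEllForm_isSymm (n : ℕ) : (hypEllForm n).IsSymm := by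
  refine LinearMap.BilinForm.isSymm_def.mpr fun x y => ?_
  have hterm : ∀ i, (x.1 i).1 * (y.1 i).2 + (x.1 i).2 * (y.1 i).1
      = (y.1 i).1 * (x.1 i).2 + (y.1 i).2 * (x.1 i).1 := fun i => by ring
  simp only [hypEllForm, LinearMap.mk₂_apply, hterm, mul_comm x.2.1, mul_comm x.2.2]

lemma hypEllForm_separatingLeft (n : ℕ) : (hypEllForm n).SeparatingLeft := by
  intro x hx
  have h1 : ∀ i, (x.1 i).1 = 0 := fun i => by
    simpa [hypEllForm, Pi.single_apply, apply_ite Prod.fst, apply_ite Prod.snd]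
      using hx (Pi.single i (0, 1), 0)
  have h2 : ∀ i, (x.1 i).2 = 0 := fun i => by
    simpa [hypEllForm, Pi.single_apply, apply_ite Prod.fst, apply_ite Prod.snd]
      using hx (Pi.single i (1, 0), 0)
  have h3 : x.2.1 = 0 := by simpa [hypEllForm] using hx (0, (1, 0))
  have h4 : x.2.2 = 0 := by simpa [hypEllForm] using hx (0, (0, 1))
  exact Prod.ext (funext fun i => Prod.ext (h1 i) (h2 i)) (Prod.ext h3 h4)

lemma hypEllForm_nondegenerate (n : ℕ) : (hypEllForm n).Nondegenerate :=
  ⟨hypEllForm_separatingLeft n, fun y hy =>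
    hypEllForm_separatingLeft n y fun x => ((hypEllForm_isSymm n).eq y x).trans (hy x)⟩

lemma admHL_iff (n : ℕ) (σ : (Fin n → K4) × K4 → ℂˣ) :
    AdmHL n σ ↔ IsQuadraticRefinement (hypEllForm n) σ := by
  simp only [AdmHL, IsQuadraticRefinement, chiHL_eq]

lemma equivHL_iff (n : ℕ) (σ σ' : (Fin n → K4) × K4 → ℂˣ) :
    EquivHL n σ σ' ↔ FormsEquivalent (hypEllForm n) σ σ' := by
  simp only [EquivHL, FormsEquivalent, chiHL_eq, signChar_injective.eq_iff]

noncomputable def unitI : ℂˣ := Units.mk0 Complex.I Complex.I_ne_zero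

lemma isPrimitiveRoot_unitI : IsPrimitiveRoot unitI 4 :=
  IsPrimitiveRoot.coe_units_iff.mp Complex.isPrimitiveRoot_I

lemma unitI_pow_val_add (a b : ZMod 2) :
    unitI ^ (a + b).val = unitI ^ a.val * unitI ^ b.val * signChar (a * b) := by
  rcases a.two_cases with rfl | rfl <;> rcases b.two_cases with rfl | rfl <;>
    simp [Units.ext_iff, unitI, ZMod.val_one, show (1 + 1 : ZMod 2) = 0 from rfl]

noncomputable def baseForm (n : ℕ) (x : (Fin n → K4) × K4) : ℂˣ :=
  signChar (∑ i, (x.1 i).1 * (x.1 i).2) * unitI ^ x.2.1.val * unitI ^ x.2.2.val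

lemma isQuadraticRefinement_baseForm (n : ℕ) :
    IsQuadraticRefinement (hypEllForm n) (baseForm n) := by
  intro x y
  have hq : ∑ i, ((x + y).1 i).1 * ((x + y).1 i).2 = ∑ i, (x.1 i).1 * (x.1 i).2
      + ∑ i, (y.1 i).1 * (y.1 i).2 + ∑ i, ((x.1 i).1 * (y.1 i).2 + (x.1 i).2 * (y.1 i).1) := by
    simp only [← sum_add_distrib]
    exact sum_congr rfl fun i _ => by simp only [Prod.fst_add, Pi.add_apply, Prod.snd_add]; ring
  rw [baseForm, baseForm, baseForm, hq]
  simp only [Prod.fst_add, Prod.snd_add, unitI_pow_val_add, AddChar.map_add_eq_mul, hypEllForm,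
    LinearMap.mk₂_apply]
  ac_rfl

lemma baseForm_zero_fst (n : ℕ) (a b : ZMod 2) :
    baseForm n (0, (a, b)) = unitI ^ (a.val + b.val) := by
  simp [baseForm, pow_add]

lemma baseForm_single (n : ℕ) (i : Fin n) :
    baseForm n (Pi.single i (1, 1), (1, 0)) = unitI ^ 3 := by
  have hsq : unitI ^ 2 = -1 := Units.ext (by simp [unitI])
  simp [baseForm, Pi.single_apply, apply_ite Prod.fst, apply_ite Prod.snd, pow_succ, hsq,
    ZMod.val_one]

lemma injective_of_eq_unitI_pow {m : ℕ} (hm : m ≤ 4) {f : Fin m → ℂˣ}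
    (hf : ∀ k, f k = unitI ^ (k : ℕ)) : Function.Injective f := fun j k h =>
  Fin.ext (isPrimitiveRoot_unitI.pow_inj (by omega) (by omega) (by rwa [← hf, ← hf]))

lemma exists_isClassRepresentatives_of_pos {n : ℕ} (hn : 0 < n) :
    ∃ S : Fin 4 → (Fin n → K4) × K4 → ℂˣ, IsClassRepresentatives (hypEllForm n) S := by
  have h₀ := isQuadraticRefinement_baseForm n
  let c : Fin 4 → (Fin n → K4) × K4 :=
    ![0, (0, (1, 0)), (0, (1, 1)), (Pi.single ⟨0, hn⟩ (1, 1), (1, 0))]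
  have hc : ∀ k, baseForm n (c k) = unitI ^ (k : ℕ) := by
    intro k
    fin_cases k <;> simp [c, baseForm_zero_fst, baseForm_single, h₀.map_zero, ZMod.val_one]
  refine ⟨_, h₀.isClassRepresentatives_twist (hypEllForm_nondegenerate n) (hypEllForm_isSymm n)
    c (injective_of_eq_unitI_pow le_rfl hc) fun d => ?_⟩
  obtain ⟨k, hk, hkd⟩ := isPrimitiveRoot_unitI.eq_pow_of_mem_rootsOfUnity
    ((mem_rootsOfUnity _ _).mpr (h₀.pow_four d))
  exact ⟨⟨k, hk⟩, (hc _).trans hkd⟩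

lemma exists_isClassRepresentatives_zero :
    ∃ S : Fin 3 → (Fin 0 → K4) × K4 → ℂˣ, IsClassRepresentatives (hypEllForm 0) S := by
  let c : Fin 3 → (Fin 0 → K4) × K4 := ![0, (0, (1, 0)), (0, (1, 1))]
  have hc : ∀ k, baseForm 0 (c k) = unitI ^ (k : ℕ) := by
    intro k
    fin_cases k <;> simp [c, baseForm, ZMod.val_one, sq]
  refine ⟨_, (isQuadraticRefinement_baseForm 0).isClassRepresentatives_twist
    (hypEllForm_nondegenerate 0) (hypEllForm_isSymm 0) c
    (injective_of_eq_unitI_pow (by norm_num) hc) fun ⟨v, a, b⟩ => ?_⟩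
  obtain rfl : v = 0 := Subsingleton.elim _ _
  refine ⟨⟨a.val + b.val, ?_⟩, (hc _).trans (baseForm_zero_fst 0 a b).symm⟩
  have := a.val_lt
  have := b.val_lt
  omega

/-- For `n > 0` there are exactly four equivalence classes of complex quadratic
forms on `K₄ⁿ × K₄` with coboundary `h^n ⊕ ℓ²`; for `n = 0` exactly three. -/
theorem stmt11 (n : ℕ) :
    (0 < n → ∃ S : Fin 4 → ((Fin n → K4) × K4 → ℂˣ),
      (∀ i, AdmHL n (S i)) ∧
      (∀ i j, EquivHL n (S i) (S j) → i = j) ∧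
      (∀ σ, AdmHL n σ → ∃ i, EquivHL n σ (S i))) ∧
    (n = 0 → ∃ S : Fin 3 → ((Fin n → K4) × K4 → ℂˣ),
      (∀ i, AdmHL n (S i)) ∧
      (∀ i j, EquivHL n (S i) (S j) → i = j) ∧
      (∀ σ, AdmHL n σ → ∃ i, EquivHL n σ (S i))) := by
  simp only [admHL_iff, equivHL_iff]
  refine ⟨fun hn => exists_isClassRepresentatives_of_pos hn, fun hn => ?_⟩
  subst hn
  exact exists_isClassRepresentatives_zero
end

section
/- Let A be a finite elementary abelian 2-group, χ a {±1}-valued symmetric bicharacter on A, σ₁: A → {±1} a function with σ₁(ab) = σ₁(a)σ₁(b)χ(a,b), τ a nonzero real with σ₃(1)² = τ Σ_{c∈A} σ₁(c), and define σ₃(a) = σ₃(1)σ₁(a)χ(a,a) and σ₂ = σ₁. Then for all a,b ∈ A: σ₃(a)·τ·χ(a,b)⁻¹·σ₃(b) = Σ_{c∈A} τ·χ(a,c)⁻¹·σ₂(c)·τ·χ(c,b)⁻¹. -/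
/-- Derivation of hexagon equation (8) from the reduced equations in the split
real case. -/
theorem stmt14 {A : Type*} [CommGroup A] [Fintype A]
    (h2 : ∀ a : A, a * a = 1)
    (χ : A → A → ℝˣ)
    (hχl : ∀ a b c : A, χ (a * b) c = χ a c * χ b c)
    (hχr : ∀ a b c : A, χ a (b * c) = χ a b * χ a c)
    (hχs : ∀ a b : A, χ a b = χ b a)
    (hχval : ∀ a b : A, χ a b = 1 ∨ χ a b = -1)
    (σ₁ : A → ℝˣ) (hσ₁val : ∀ a : A, σ₁ a = 1 ∨ σ₁ a = -1)
    (hσ₁ : ∀ a b : A, σ₁ (a * b) = σ₁ a * σ₁ b * χ a b)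
    (τ : ℝ) (hτ : τ ≠ 0)
    (σ₂ σ₃ : A → ℝˣ)
    (hσ₂ : ∀ a : A, σ₂ a = σ₁ a)
    (hσ₃1 : (σ₃ 1 : ℝ) ^ 2 = τ * ∑ c : A, (σ₁ c : ℝ))
    (hσ₃ : ∀ a : A, σ₃ a = σ₃ 1 * σ₁ a * χ a a) :
    ∀ a b : A,
      (σ₃ a : ℝ) * τ * (((χ a b)⁻¹ : ℝˣ) : ℝ) * (σ₃ b : ℝ) =
        ∑ c : A, τ * (((χ a c)⁻¹ : ℝˣ) : ℝ) * (σ₂ c : ℝ) * τ *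
          (((χ c b)⁻¹ : ℝˣ) : ℝ) := by
  have χsq : ∀ a b : A, ((χ a b : ℝˣ) : ℝ) * ((χ a b : ℝˣ) : ℝ) = 1 := by
    intro a b; rcases hχval a b with h | h <;> simp [h]
  have χinv : ∀ a b : A, (((χ a b)⁻¹ : ℝˣ) : ℝ) = ((χ a b : ℝˣ) : ℝ) := by
    intro a b; rcases hχval a b with h | h <;> simp [h]
  have σsq : ∀ a : A, ((σ₁ a : ℝˣ) : ℝ) * ((σ₁ a : ℝˣ) : ℝ) = 1 := by
    intro a; rcases hσ₁val a with h | h <;> simp [h]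
  intro a b
  set S : ℝ := ∑ c : A, (σ₁ c : ℝ) with hS
  -- key reindexing lemma
  have key : ∀ e : A, (∑ c : A, (σ₁ c : ℝ) * ((χ e c : ℝˣ) : ℝ))
      = (σ₁ e : ℝ) * ((χ e e : ℝˣ) : ℝ) * S := by
    intro e
    have hre : (∑ c : A, (σ₁ (e * c) : ℝ) * ((χ e (e * c) : ℝˣ) : ℝ))
        = ∑ c : A, (σ₁ c : ℝ) * ((χ e c : ℝˣ) : ℝ) :=
      Fintype.sum_equiv (Equiv.mulLeft e) _ _ (fun c => rfl)
    rw [← hre]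
    have hterm : ∀ c : A, (σ₁ (e * c) : ℝ) * ((χ e (e * c) : ℝˣ) : ℝ)
        = (σ₁ e : ℝ) * ((χ e e : ℝˣ) : ℝ) * (σ₁ c : ℝ) := by
      intro c
      rw [hσ₁, hχr]
      push_cast
      linear_combination ((σ₁ e : ℝ) * (σ₁ c : ℝ) * ((χ e e : ℝˣ) : ℝ)) * χsq e c
    simp only [hterm]
    rw [← Finset.mul_sum]
  have hterm2 : ∀ c : A, τ * (((χ a c)⁻¹ : ℝˣ) : ℝ) * (σ₂ c : ℝ) * τ *
      (((χ c b)⁻¹ : ℝˣ) : ℝ)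
      = τ * τ * ((σ₁ c : ℝ) * ((χ (a * b) c : ℝˣ) : ℝ)) := by
    intro c
    rw [χinv, χinv, hσ₂, hχl, hχs c b]
    push_cast
    ring
  rw [Finset.sum_congr rfl (fun c _ => hterm2 c), ← Finset.mul_sum, key (a * b),
    hσ₃ a, hσ₃ b, χinv, hσ₁ a b, hχl, hχr, hχr, hχs b a]
  push_cast
  linear_combination ((σ₁ a : ℝ) * (σ₁ b : ℝ) * ((χ a a : ℝˣ) : ℝ) *
      ((χ b b : ℝˣ) : ℝ) * τ * ((χ a b : ℝˣ) : ℝ)) * hσ₃1 -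
    (τ * τ * S * (σ₁ a : ℝ) * (σ₁ b : ℝ) * ((χ a a : ℝˣ) : ℝ) *
      ((χ b b : ℝˣ) : ℝ) * ((χ a b : ℝˣ) : ℝ)) * χsq a b
end

section
/- In the real/quaternionic case, the set of braidings on 𝒞_ℍ(K₄ⁿ, h^n, τ) is in bijection with pairs (σ, ε) where σ is an h^n-admissible real quadratic form on K₄ⁿ with sgn(Σσ) = -sgn(τ) and ε ∈ {±1}. In particular 𝒞_ℍ(K₄⁰, h⁰, τ) with τ > 0 admits no braiding. -/
/-- The standard hyperbolic pairing on `K₄`. -/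
noncomputable def hq (a b : K4) : ℝˣ :=
  (-1 : ℝˣ) ^ (a.1 * b.2 + a.2 * b.1 : ZMod 2).val

/-- The `n`-fold orthogonal sum `h^n` of the standard hyperbolic pairing. -/
noncomputable def hpow (n : ℕ) (a b : Fin n → K4) : ℝˣ := ∏ i, hq (a i) (b i)

/-- The reduced hexagon equations for a braiding on the real/quaternionic
Tambara–Yamagami category `𝒞_ℍ(K₄ⁿ, h^n, τ)`, for data `(σ₀, σ₁, σ₂, σ₃)`;
note the factor `-2` in the equation for `σ₃(1)²`. -/
def ReducedQuat (n : ℕ) (τ : ℝ)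
    (s : ((Fin n → K4) → (Fin n → K4) → ℝˣ) × ((Fin n → K4) → ℝˣ) ×
      ((Fin n → K4) → ℝˣ) × ((Fin n → K4) → ℝˣ)) : Prop :=
  (∀ a b, s.1 a b = hpow n a b) ∧
  (∀ a, s.2.1 a ^ 2 = hpow n a a) ∧
  (∀ a b, s.2.1 (a + b) = s.2.1 a * s.2.1 b * hpow n a b) ∧
  (∀ a, s.2.2.1 a = s.2.1 a) ∧
  ((s.2.2.2 0 : ℝ) ^ 2 = -2 * τ * ∑ c : Fin n → K4, (s.2.1 c : ℝ)) ∧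
  (∀ a, s.2.2.2 a = s.2.2.2 0 * s.2.1 a)

/-!
The hexagon equations determine `σ₀`, `σ₂` and `σ₃` from `σ₁` and the number `σ₃(0)`, subject to
`σ₃(0)² = -2τ ∑ σ₁`. Since `σ₁` refines the nondegenerate pairing `h^n`, the Gauss sum satisfies
`(∑ σ₁)² = |K₄ⁿ| = 4ⁿ`, so `∑ σ₁ = ±2ⁿ` and, with `τ = ±1/(2·2ⁿ)`, `-2τ ∑ σ₁ = ±1`. Positivity
of `σ₃(0)²` forces the sign `+1`, i.e. `τ ∑ σ₁ < 0`, and then `σ₃(0) = ±1` is a free sign.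
For `n = 0` the sum is `σ₁(0) = 1`, which rules out `τ > 0`.
-/

open Finset

lemma neg_one_pow_val_add (z w : ZMod 2) :
    (-1 : ℝˣ) ^ (z + w).val = (-1) ^ z.val * (-1) ^ w.val := by
  rw [ZMod.val_add, ← pow_add]
  ext
  push_cast
  rw [← neg_one_pow_eq_pow_mod_two]

lemma hq_self (x : K4) : hq x x = 1 := by
  have h : (x.1 * x.2 + x.2 * x.1 : ZMod 2) = 0 := by
    rw [mul_comm x.2, ← two_mul, show (2 : ZMod 2) = 0 from rfl, zero_mul]
  rw [hq, h, ZMod.val_zero, pow_zero]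

lemma hq_add_left (x x' y : K4) : hq (x + x') y = hq x y * hq x' y := by
  rw [hq, hq, hq, ← neg_one_pow_val_add]
  congr 2
  simp only [Prod.fst_add, Prod.snd_add]
  ring

lemma hq_zero_left (y : K4) : hq 0 y = 1 := by
  simp [hq]

lemma exists_hq_eq_neg_one {y : K4} (hy : y ≠ 0) : ∃ x, hq x y = -1 := by
  obtain ⟨x, hx⟩ : ∃ x : K4, (x.1 * y.2 + x.2 * y.1 : ZMod 2) = 1 := by
    revert y; decide
  exact ⟨x, by rw [hq, hx, ZMod.val_one, pow_one]⟩

section hpow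

variable {n : ℕ}

lemma hpow_self (a : Fin n → K4) : hpow n a a = 1 := by
  simp [hpow, hq_self]

lemma hpow_zero_left (b : Fin n → K4) : hpow n 0 b = 1 := by
  simp [hpow, hq_zero_left]

lemma hpow_add_left (a a' b : Fin n → K4) :
    hpow n (a + a') b = hpow n a b * hpow n a' b := by
  simp [hpow, hq_add_left, prod_mul_distrib]

lemma hpow_zero_right (a : Fin n → K4) : hpow n a 0 = 1 := by
  simp [hpow, hq]

lemma exists_hpow_eq_neg_one {c : Fin n → K4} (hc : c ≠ 0) : ∃ a, hpow n a c = -1 := by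
  classical
  obtain ⟨i, hi⟩ := Function.ne_iff.mp hc
  obtain ⟨x, hx⟩ := exists_hq_eq_neg_one hi
  refine ⟨Pi.single i x, ?_⟩
  rw [hpow, prod_eq_single i (fun j _ hj => by simp [hj, hq_zero_left]) (by simp)]
  simpa using hx

noncomputable def hpowChar (c : Fin n → K4) : AddChar (Fin n → K4) ℝ where
  toFun a := hpow n a c
  map_zero_eq_one' := by simp [hpow_zero_left]
  map_add_eq_mul' a b := by simp [hpow_add_left]

lemma sum_hpow_left (c : Fin n → K4) :
    ∑ a, (hpow n a c : ℝ) = if c = 0 then 4 ^ n else 0 := by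
  split_ifs with hc
  · simp [hc, hpow_zero_right]
  · obtain ⟨a, ha⟩ := exists_hpow_eq_neg_one hc
    refine AddChar.sum_eq_zero_of_ne_one (ψ := hpowChar c) (AddChar.ne_one_iff.mpr ⟨a, ?_⟩)
    simp only [hpowChar, AddChar.coe_mk, ha, Units.val_neg, Units.val_one]
    norm_num

end hpow

def IsAdmissibleQuadForm (n : ℕ) (σ : (Fin n → K4) → ℝˣ) : Prop :=
  ∀ a b, σ (a + b) = σ a * σ b * hpow n a b

namespace IsAdmissibleQuadForm

variable {n : ℕ} {σ : (Fin n → K4) → ℝˣ}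

lemma map_zero (hσ : IsAdmissibleQuadForm n σ) : σ 0 = 1 := by
  simpa [hpow_zero_left] using hσ 0 0

lemma sq_eq_one (hσ : IsAdmissibleQuadForm n σ) (a : Fin n → K4) : σ a ^ 2 = 1 := by
  have h := hσ a a
  rw [ZModModule.add_self a, hσ.map_zero, hpow_self, mul_one] at h
  rw [sq, h]

/-- Gauss sum: substituting `b = a + c` turns `σ a σ b` into `σ c h(a, c)`, and orthogonality of
the characters `h(·, c)` leaves only `c = 0`. -/
lemma sq_sum (hσ : IsAdmissibleQuadForm n σ) : (∑ c, (σ c : ℝ)) ^ 2 = 4 ^ n := by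
  have hshift (a : Fin n → K4) : ∑ b, (σ a : ℝ) * σ b = ∑ c, (σ c : ℝ) * hpow n a c := by
    rw [← Fintype.sum_equiv (Equiv.addLeft a) _ _ fun _ => rfl]
    refine sum_congr rfl fun c _ => ?_
    have hsq : (σ a : ℝ) * σ a = 1 := by rw [← Units.val_mul, ← sq, hσ.sq_eq_one]; rfl
    rw [Equiv.coe_addLeft, hσ, Units.val_mul, Units.val_mul, ← mul_assoc, ← mul_assoc, hsq,
      one_mul]
  calc (∑ c, (σ c : ℝ)) ^ 2 = ∑ a, ∑ b, (σ a : ℝ) * σ b := by rw [sq, sum_mul_sum]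
    _ = ∑ c, (σ c : ℝ) * ∑ a, (hpow n a c : ℝ) := by
      simp_rw [hshift, mul_sum]
      exact sum_comm
    _ = 4 ^ n := by simp [sum_hpow_left, hσ.map_zero]

lemma sum_eq_two_pow_or (hσ : IsAdmissibleQuadForm n σ) :
    ∑ c, (σ c : ℝ) = 2 ^ n ∨ ∑ c, (σ c : ℝ) = -2 ^ n := by
  rw [← sq_eq_sq_iff_eq_or_eq_neg, hσ.sq_sum, ← pow_mul, mul_comm, pow_mul]
  norm_num

end IsAdmissibleQuadForm

lemma neg_two_mul_mul_eq_one {n : ℕ} {τ S : ℝ}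
    (hτ : τ = ((2 : ℝ) * 2 ^ n)⁻¹ ∨ τ = -((2 : ℝ) * 2 ^ n)⁻¹) (hS : S = 2 ^ n ∨ S = -2 ^ n)
    (hτS : τ * S < 0) : -2 * τ * S = 1 := by
  have h2n : (0 : ℝ) < 2 ^ n := by positivity
  rcases hτ with rfl | rfl <;> rcases hS with rfl | rfl <;> field_simp at hτS ⊢ <;> linarith

lemma Units.eq_one_or_eq_neg_one_of_val_sq {R : Type*} [Ring R] [NoZeroDivisors R] {x : Rˣ}
    (h : (x : R) ^ 2 = 1) : x = 1 ∨ x = -1 := by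
  rcases sq_eq_one_iff.mp h with h | h
  · exact Or.inl (Units.ext h)
  · exact Or.inr (Units.ext h)

/-- The data `(σ₀, σ₁, σ₂, σ₃)` of a braiding on `𝒞_ℍ(K₄ⁿ, h^n, τ)`. -/
abbrev HexagonData (n : ℕ) : Type :=
  ((Fin n → K4) → (Fin n → K4) → ℝˣ) × ((Fin n → K4) → ℝˣ) ×
    ((Fin n → K4) → ℝˣ) × ((Fin n → K4) → ℝˣ)

namespace ReducedQuat

variable {n : ℕ} {τ : ℝ} {s : HexagonData n}

lemma isAdmissibleQuadForm (hs : ReducedQuat n τ s) : IsAdmissibleQuadForm n s.2.1 :=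
  hs.2.2.1

lemma mul_sum_neg (hs : ReducedQuat n τ s) : τ * ∑ c, (s.2.1 c : ℝ) < 0 := by
  have h := pow_pos (abs_pos.mpr (s.2.2.2 0).ne_zero) 2
  rw [sq_abs, hs.2.2.2.2.1] at h
  linarith

lemma eq_mk (hs : ReducedQuat n τ s) :
    s = (hpow n, s.2.1, s.2.1, fun a => s.2.2.2 0 * s.2.1 a) := by
  obtain ⟨h₀, -, -, h₂, -, h₃⟩ := hs
  ext1
  · exact funext₂ h₀
  · exact Prod.ext rfl (Prod.ext (funext h₂) (funext h₃))

lemma sigma3_zero_eq_one_or (hτ : τ = ((2 : ℝ) * 2 ^ n)⁻¹ ∨ τ = -((2 : ℝ) * 2 ^ n)⁻¹)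
    (hs : ReducedQuat n τ s) : s.2.2.2 0 = 1 ∨ s.2.2.2 0 = -1 := by
  refine Units.eq_one_or_eq_neg_one_of_val_sq ?_
  rw [hs.2.2.2.2.1]
  exact neg_two_mul_mul_eq_one hτ hs.isAdmissibleQuadForm.sum_eq_two_pow_or hs.mul_sum_neg

lemma of_isAdmissibleQuadForm (hτ : τ = ((2 : ℝ) * 2 ^ n)⁻¹ ∨ τ = -((2 : ℝ) * 2 ^ n)⁻¹)
    {σ : (Fin n → K4) → ℝˣ} {ε : ℝˣ} (hσ : IsAdmissibleQuadForm n σ)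
    (hτσ : τ * ∑ c, (σ c : ℝ) < 0) (hε : ε = 1 ∨ ε = -1) :
    ReducedQuat n τ (hpow n, σ, σ, fun a => ε * σ a) := by
  refine ⟨fun _ _ => rfl, fun a => by rw [hσ.sq_eq_one, hpow_self], hσ, fun _ => rfl, ?_, ?_⟩
  · show ((ε * σ 0 : ℝˣ) : ℝ) ^ 2 = -2 * τ * ∑ c, (σ c : ℝ)
    rw [neg_two_mul_mul_eq_one hτ hσ.sum_eq_two_pow_or hτσ, hσ.map_zero, mul_one]
    rcases hε with rfl | rfl <;> simp
  · simp [hσ.map_zero]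

end ReducedQuat

noncomputable def reducedQuatEquiv (n : ℕ) (τ : ℝ)
    (hτ : τ = ((2 : ℝ) * 2 ^ n)⁻¹ ∨ τ = -((2 : ℝ) * 2 ^ n)⁻¹) :
    {s : HexagonData n // ReducedQuat n τ s} ≃
      {p : ((Fin n → K4) → ℝˣ) × ℝˣ //
        IsAdmissibleQuadForm n p.1 ∧ τ * ∑ c, (p.1 c : ℝ) < 0 ∧ (p.2 = 1 ∨ p.2 = -1)} where
  toFun s := ⟨(s.1.2.1, s.1.2.2.2 0),
    s.2.isAdmissibleQuadForm, s.2.mul_sum_neg, s.2.sigma3_zero_eq_one_or hτ⟩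
  invFun p := ⟨(hpow n, p.1.1, p.1.1, fun a => p.1.2 * p.1.1 a),
    .of_isAdmissibleQuadForm hτ p.2.1 p.2.2.1 p.2.2.2⟩
  left_inv s := Subtype.ext s.2.eq_mk.symm
  right_inv p := Subtype.ext (Prod.ext rfl (by simp [p.2.1.map_zero]))

/-- Braidings on the real/quaternionic category `𝒞_ℍ(K₄ⁿ, h^n, τ)` are in
bijection with pairs `(σ, ε)` where `σ` is an `h^n`-admissible real quadratic
form with `sgn(Σσ) = -sgn(τ)` and `ε = ±1`; in particular for `n = 0`, `τ > 0`
there is no braiding. -/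
theorem stmt16 (n : ℕ) (τ : ℝ)
    (hτ : τ = ((2 : ℝ) * 2 ^ n)⁻¹ ∨ τ = -((2 : ℝ) * 2 ^ n)⁻¹) :
    Nonempty
      ({s : ((Fin n → K4) → (Fin n → K4) → ℝˣ) × ((Fin n → K4) → ℝˣ) ×
          ((Fin n → K4) → ℝˣ) × ((Fin n → K4) → ℝˣ) // ReducedQuat n τ s} ≃
        {p : ((Fin n → K4) → ℝˣ) × ℝˣ //
          (∀ a b, p.1 (a + b) = p.1 a * p.1 b * hpow n a b) ∧
          (τ * ∑ c : Fin n → K4, (p.1 c : ℝ) < 0) ∧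
          (p.2 = 1 ∨ p.2 = -1)}) ∧
    (n = 0 ∧ 0 < τ →
      IsEmpty {s : ((Fin n → K4) → (Fin n → K4) → ℝˣ) × ((Fin n → K4) → ℝˣ) ×
          ((Fin n → K4) → ℝˣ) × ((Fin n → K4) → ℝˣ) // ReducedQuat n τ s}) := by
  refine ⟨⟨reducedQuatEquiv n τ hτ⟩, ?_⟩
  rintro ⟨rfl, hτ_pos⟩
  refine ⟨fun s => ?_⟩
  have h := s.2.mul_sum_neg
  rw [Fintype.sum_subsingleton _ 0, s.2.isAdmissibleQuadForm.map_zero,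
    Units.val_one, mul_one] at h
  exact h.not_gt hτ_pos
end
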